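/- arXiv:2203.00940 — 4 statements merged into one kernel-verified Lean document; each statement's English description precedes it below -/
import Mathlib

section
/- Let A be a divisor of F and let a = Σ_{i=0}^{μ−1} a_i y_i^{(A)} ∈ Я(A) with a_i ∈ 𝔽_q[x]. Then for every i, deg a_i ≤ (δ_A(a) − δ_A(y_i^{(A)}))/μ ≤ (δ_A(a) + deg A)/μ. -/
noncomputable section

open Polynomial
attribute [local instance] Classical.propDecidable

/-- Abstract axiomatization of the data of an algebraic function field of one
variable of genus `genus` whose full field of constants is the finite field `Fq`:
a field `F` of functions, a set of places with their discrete valuations `v`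
(normalized so that each valuation is surjective onto `ℤ`; by convention
`v P 0 = 0`), degrees of places, evaluation of functions at rational places,
Riemann–Roch spaces `RRmod A` of divisors `A : Place →₀ ℤ` together with the
statement of the Riemann–Roch theorem tying their dimensions to the genus. -/
structure FnF (Fq : Type) [Field Fq] where
  F : Type
  [fieldF : Field F]
  [algF : Algebra Fq F]
  Place : Type
  v : Place → F → ℤ
  v_zero : ∀ P, v P 0 = 0
  v_mul : ∀ (P : Place) (f g : F), f ≠ 0 → g ≠ 0 → v P (f * g) = v P f + v P g
  v_add : ∀ (P : Place) (f g : F), f + g ≠ 0 → f ≠ 0 → g ≠ 0 →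
    min (v P f) (v P g) ≤ v P (f + g)
  v_neg : ∀ (P : Place) (f : F), v P (-f) = v P f
  v_const : ∀ (P : Place) (c : Fq), v P (algebraMap Fq F c) = 0
  v_surj : ∀ P : Place, ∃ f : F, f ≠ 0 ∧ v P f = 1
  v_finite : ∀ f : F, f ≠ 0 → {P : Place | v P f ≠ 0}.Finite
  fullConstantField : ∀ f : F, f ≠ 0 → (∀ P, 0 ≤ v P f) →
    ∃ c : Fq, f = algebraMap Fq F c
  degPlace : Place → ℕ
  degPlace_pos : ∀ P, 0 < degPlace P
  eval : Place → F → Fq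
  eval_add : ∀ (P : Place) (f g : F), degPlace P = 1 → 0 ≤ v P f → 0 ≤ v P g →
    eval P (f + g) = eval P f + eval P g
  eval_mul : ∀ (P : Place) (f g : F), degPlace P = 1 → 0 ≤ v P f → 0 ≤ v P g →
    eval P (f * g) = eval P f * eval P g
  eval_const : ∀ (P : Place) (c : Fq), degPlace P = 1 →
    eval P (algebraMap Fq F c) = c
  eval_eq_zero_iff : ∀ (P : Place) (f : F), degPlace P = 1 → 0 ≤ v P f →
    (eval P f = 0 ↔ (f = 0 ∨ 1 ≤ v P f))
  genus : ℕ
  RRmod : (Place →₀ ℤ) → Submodule Fq F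
  mem_RRmod : ∀ (A : Place →₀ ℤ) (f : F),
    f ∈ RRmod A ↔ (f = 0 ∨ ∀ P, 0 ≤ v P f + A P)
  riemannRoch_le : ∀ A : Place →₀ ℤ,
    (A.sum fun P n => n * (degPlace P : ℤ)) + 1 - genus ≤
      (Module.finrank Fq (RRmod A) : ℤ)
  riemannRoch_eq : ∀ A : Place →₀ ℤ,
    2 * (genus : ℤ) - 1 ≤ (A.sum fun P n => n * (degPlace P : ℤ)) →
    (Module.finrank Fq (RRmod A) : ℤ) =
      (A.sum fun P n => n * (degPlace P : ℤ)) + 1 - genus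
  RRmod_eq_bot : ∀ A : Place →₀ ℤ,
    (A.sum fun P n => n * (degPlace P : ℤ)) < 0 → RRmod A = ⊥

attribute [instance] FnF.fieldF FnF.algF

namespace FnF

variable {Fq : Type} [Field Fq] (D : FnF Fq)

/-- Divisors of the function field. -/
abbrev Divisor := D.Place →₀ ℤ

/-- The degree of a divisor. -/
def degDiv (A : D.Divisor) : ℤ := A.sum fun P n => n * (D.degPlace P : ℤ)

/-- `Я(A) = ⋃ₘ L(m·P∞ + A)`, the functions whose pole divisor is bounded by
`A` away from `P∞`. -/
def Ya (Pinf : D.Place) (A : D.Divisor) : Set D.F :=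
  {a | ∃ m : ℤ, a ∈ D.RRmod (Finsupp.single Pinf m + A)}

/-- `δ_A(a) = -v_{P∞}(a) - A(P∞)`, the least `m` with `a ∈ L(m·P∞ + A)`
(meaningful for nonzero `a ∈ Я(A)`). -/
def deltaZ (Pinf : D.Place) (A : D.Divisor) (a : D.F) : ℤ :=
  -(D.v Pinf a) - A Pinf

/-- `δ_A(a)` with the convention `δ_A(0) = -∞`. -/
def delta (Pinf : D.Place) (A : D.Divisor) (a : D.F) : WithBot ℤ :=
  if a = 0 then ⊥ else (D.deltaZ Pinf A a : WithBot ℤ)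

/-- The Weierstrass semigroup of a place `P∞`: pole orders at `P∞` of functions
regular away from `P∞`. -/
def WSemigroup (Pinf : D.Place) : Set ℤ :=
  {m | ∃ f : D.F, f ≠ 0 ∧ D.v Pinf f = -m ∧ ∀ P, P ≠ Pinf → 0 ≤ D.v P f}

end FnF

namespace FnF

variable {Fq : Type} [Field Fq] (D : FnF Fq)

/-- `y : Fin μ → F` is the Apéry system of `Я(A)` (with respect to `P∞` and `μ`):
`y i` is a nonzero element of `Я(A)` of minimal `δ_A`-value among all nonzero
`a ∈ Я(A)` with `δ_A(a) ≡ i (mod μ)`. -/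
def IsApery (Pinf : D.Place) (μ : ℕ) (A : D.Divisor) (y : Fin μ → D.F) : Prop :=
  ∀ i : Fin μ, y i ∈ D.Ya Pinf A ∧ y i ≠ 0 ∧
    D.deltaZ Pinf A (y i) ≡ (i : ℤ) [ZMOD (μ : ℤ)] ∧
    ∀ a ∈ D.Ya Pinf A, a ≠ 0 → D.deltaZ Pinf A a ≡ (i : ℤ) [ZMOD (μ : ℤ)] →
      D.deltaZ Pinf A (y i) ≤ D.deltaZ Pinf A a

end FnF

/-!
Extend `v_{P∞}` to a valuation with `v(0) = ⊤`. As `x` has a pole of order `μ` at `P∞`, a nonzero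
term of `a = Σ aⱼ yⱼ` has `δ_A(aⱼ(x)·yⱼ) = μ·deg aⱼ + δ_A(yⱼ) ≡ j (mod μ)`. So these terms have
pairwise distinct valuations, nothing cancels, and `δ_A(a) ≥ μ·deg aᵢ + δ_A(yᵢ)`. The second
inequality is `δ_A(yᵢ) ≥ -deg A`, which holds because `L(B) = 0` whenever `deg B < 0`.
-/

namespace LinearOrderedAddCommGroupWithTop

theorem nsmul_lt_nsmul_of_neg {Γ : Type*} [LinearOrderedAddCommGroupWithTop Γ] {γ : Γ}
    (hγ : γ < 0) {k n : ℕ} (hkn : k < n) : n • γ < k • γ := by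
  obtain ⟨d, rfl⟩ := Nat.exists_eq_add_of_lt hkn
  have hk : k • γ ≠ ⊤ := ((nsmul_nonpos hγ.le k).trans_lt top_pos).ne
  calc (k + d + 1) • γ = k • γ + (d + 1) • γ := by rw [add_assoc, add_nsmul]
    _ < k • γ + 0 := (add_lt_add_iff_right_of_ne_top hk).2 (Right.nsmul_neg d.succ_pos hγ)
    _ = k • γ := add_zero _

end LinearOrderedAddCommGroupWithTop

namespace AddValuation

section Sum

variable {R Γ : Type*} [Ring R] [LinearOrderedAddCommMonoidWithTop Γ] (v : AddValuation R Γ)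

theorem map_sum_eq_of_lt {ι : Type*} [DecidableEq ι] {s : Finset ι} {f : ι → R} {j : ι}
    (hj : j ∈ s) (hf : ∀ i ∈ s \ {j}, v (f j) < v (f i)) :
    v (∑ i ∈ s, f i) = v (f j) :=
  Valuation.map_sum_eq_of_lt v hj hf

theorem map_sum_eq_inf {ι : Type*} {s : Finset ι} {f : ι → R}
    (hf : ∀ i ∈ s, ∀ j ∈ s, v (f i) = v (f j) → v (f i) ≠ ⊤ → i = j) :
    v (∑ i ∈ s, f i) = s.inf fun i => v (f i) := by
  classical
  rcases s.eq_empty_or_nonempty with rfl | hs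
  · simp
  obtain ⟨j, hj, hmin⟩ := s.exists_min_image (fun i => v (f i)) hs
  rw [le_antisymm (Finset.inf_le hj) (Finset.le_inf hmin)]
  by_cases htop : v (f j) = ⊤
  · exact le_antisymm (htop ▸ le_top) (v.map_le_sum fun i hi => htop ▸ hmin i hi)
  refine v.map_sum_eq_of_lt hj fun i hi => ?_
  obtain ⟨his, hij⟩ := Finset.mem_sdiff.mp hi
  exact (hmin i his).lt_of_ne fun h => Finset.notMem_singleton.mp hij (hf j hj i his h htop).symm

end Sum

/-- At a pole `x` the leading term of `q(x)` dominates all the others. -/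
theorem map_aeval_eq_natDegree_nsmul {K L Γ : Type*} [Field K] [Ring L] [Algebra K L]
    [LinearOrderedAddCommGroupWithTop Γ] (v : AddValuation L Γ)
    (hK : ∀ c : K, c ≠ 0 → v (algebraMap K L c) = 0) {x : L} (hx : v x < 0)
    {q : Polynomial K} (hq : q ≠ 0) :
    v (Polynomial.aeval x q) = q.natDegree • v x := by
  classical
  have hterm : ∀ k ∈ q.support, v (algebraMap K L (q.coeff k) * x ^ k) = k • v x := by
    intro k hk
    rw [v.map_mul, v.map_pow, hK _ (Polynomial.mem_support_iff.mp hk), zero_add]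
  have hlead := Polynomial.natDegree_mem_support_of_nonzero hq
  rw [Polynomial.aeval_def, Polynomial.eval₂_eq_sum, Polynomial.sum_def,
    v.map_sum_eq_of_lt hlead, hterm _ hlead]
  intro k hk
  obtain ⟨hks, hkn⟩ := Finset.mem_sdiff.mp hk
  rw [hterm _ hlead, hterm _ hks]
  exact LinearOrderedAddCommGroupWithTop.nsmul_lt_nsmul_of_neg hx
    ((Polynomial.le_natDegree_of_mem_supp k hks).lt_of_ne (Finset.notMem_singleton.mp hkn))

end AddValuation

namespace FnF

variable {Fq : Type} [Field Fq] (D : FnF Fq)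

def valuation (P : D.Place) : AddValuation D.F (WithTop ℤ) :=
  AddValuation.of (fun f => if f = 0 then ⊤ else (D.v P f : WithTop ℤ)) (if_pos rfl)
    (by simpa using D.v_const P 1)
    (by
      intro f g
      rcases eq_or_ne f 0 with rfl | hf
      · simp
      rcases eq_or_ne g 0 with rfl | hg
      · simp
      rcases eq_or_ne (f + g) 0 with hfg | hfg
      · simp [hfg]
      simpa [hf, hg, hfg] using D.v_add P f g hfg hf hg)
    (by
      intro f g
      rcases eq_or_ne f 0 with rfl | hf
      · simp
      rcases eq_or_ne g 0 with rfl | hg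
      · simp
      simp [hf, hg, D.v_mul P f g hf hg])

variable {D}

theorem valuation_of_ne_zero {P : D.Place} {f : D.F} (hf : f ≠ 0) :
    D.valuation P f = D.v P f :=
  if_neg hf

theorem valuation_algebraMap (P : D.Place) {c : Fq} (hc : c ≠ 0) :
    D.valuation P (algebraMap Fq D.F c) = 0 := by
  rw [valuation_of_ne_zero ((map_ne_zero_iff _ (algebraMap Fq D.F).injective).mpr hc),
    D.v_const]
  rfl

theorem IsApery.eq_of_deltaZ_modEq {Pinf : D.Place} {μ : ℕ} {A : D.Divisor} {y : Fin μ → D.F}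
    (hy : D.IsApery Pinf μ A y) {j k : Fin μ}
    (hjk : D.deltaZ Pinf A (y j) ≡ D.deltaZ Pinf A (y k) [ZMOD μ]) : j = k := by
  have h : ((j : ℕ) : ℤ) ≡ (k : ℕ) [ZMOD μ] := ((hy j).2.2.1.symm.trans hjk).trans (hy k).2.2.1
  rw [Int.ModEq, Int.emod_eq_of_lt (Int.natCast_nonneg _) (by exact_mod_cast j.isLt),
    Int.emod_eq_of_lt (Int.natCast_nonneg _) (by exact_mod_cast k.isLt)] at h
  exact Fin.ext (by exact_mod_cast h)

theorem degDiv_single_add {P : D.Place} (hP : D.degPlace P = 1) (m : ℤ) (A : D.Divisor) :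
    D.degDiv (Finsupp.single P m + A) = m + D.degDiv A := by
  unfold degDiv
  rw [Finsupp.sum_add_index' (fun _ => zero_mul _) (fun _ _ _ => add_mul _ _ _),
    Finsupp.sum_single_index (zero_mul _), hP, Nat.cast_one, mul_one]

theorem mem_RRmod_single_deltaZ {Pinf : D.Place} {A : D.Divisor} {a : D.F}
    (ha : a ∈ D.Ya Pinf A) :
    a ∈ D.RRmod (Finsupp.single Pinf (D.deltaZ Pinf A a) + A) := by
  obtain ⟨m, hm⟩ := ha
  rw [D.mem_RRmod] at hm ⊢
  refine hm.imp_right fun h P => ?_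
  rcases eq_or_ne P Pinf with rfl | hP
  · simp [deltaZ]
  · simpa [Finsupp.single_eq_of_ne hP] using h P

theorem neg_degDiv_le_deltaZ {Pinf : D.Place} (hPinf : D.degPlace Pinf = 1) {A : D.Divisor}
    {a : D.F} (ha : a ∈ D.Ya Pinf A) (ha0 : a ≠ 0) : -D.degDiv A ≤ D.deltaZ Pinf A a := by
  by_contra! hlt
  have hdeg : D.degDiv (Finsupp.single Pinf (D.deltaZ Pinf A a) + A) < 0 := by
    rw [degDiv_single_add hPinf]
    omega
  have hmem := mem_RRmod_single_deltaZ ha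
  rw [D.RRmod_eq_bot _ hdeg, Submodule.mem_bot] at hmem
  exact ha0 hmem

theorem valuation_aeval_mul {P : D.Place} {x : D.F} (hx : D.v P x < 0) {q : Polynomial Fq}
    (hq : q ≠ 0) {f : D.F} (hf : f ≠ 0) :
    D.valuation P (Polynomial.aeval x q * f) =
      ((q.natDegree * D.v P x + D.v P f : ℤ) : WithTop ℤ) := by
  have hx0 : x ≠ 0 := by
    rintro rfl
    rw [D.v_zero] at hx
    exact hx.false
  have hwx : D.valuation P x < 0 := by
    rw [valuation_of_ne_zero hx0]
    exact WithTop.coe_lt_coe.mpr hx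
  rw [AddValuation.map_mul, (D.valuation P).map_aeval_eq_natDegree_nsmul
    (fun _ => valuation_algebraMap P) hwx hq, valuation_of_ne_zero hx0,
    valuation_of_ne_zero hf, ← WithTop.coe_nsmul, ← WithTop.coe_add, nsmul_eq_mul]

theorem IsApery.valuation_sum_le {Pinf : D.Place} {μ : ℕ} {A : D.Divisor} {y : Fin μ → D.F}
    (hy : D.IsApery Pinf μ A y) (hμ : 0 < μ) {x : D.F} (hxv : D.v Pinf x = -μ)
    (p : Fin μ → Polynomial Fq) (i : Fin μ) :
    D.valuation Pinf (∑ j, Polynomial.aeval x (p j) * y j) ≤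
      D.valuation Pinf (Polynomial.aeval x (p i) * y i) := by
  have hx : D.v Pinf x < 0 := by omega
  have hp : ∀ j, D.valuation Pinf (Polynomial.aeval x (p j) * y j) ≠ ⊤ → p j ≠ 0 :=
    fun j h hpj => h (by simp [hpj])
  rw [AddValuation.map_sum_eq_inf]
  · exact Finset.inf_le (Finset.mem_univ i)
  intro j _ k _ hjk htop
  have hpk := hp k (hjk ▸ htop)
  rw [valuation_aeval_mul hx (hp j htop) (hy j).2.1, valuation_aeval_mul hx hpk (hy k).2.1,
    WithTop.coe_inj, hxv] at hjk
  exact hy.eq_of_deltaZ_modEq (Int.modEq_iff_dvd.mpr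
    ⟨((p j).natDegree : ℤ) - (p k).natDegree, by unfold deltaZ; linarith⟩)

end FnF

open FnF in
theorem coefficient_degree_bound_general
    {Fq : Type} [Field Fq] (D : FnF Fq)
    (Pinf : D.Place) (hPinf : D.degPlace Pinf = 1)
    (μ : ℕ) (hμpos : 0 < μ)
    (x : D.F) (hxv : D.v Pinf x = -(μ : ℤ))
    (A : D.Divisor) (y : Fin μ → D.F) (hy : D.IsApery Pinf μ A y)
    (a : D.F)
    (p : Fin μ → Polynomial Fq) (hrep : a = ∑ i, Polynomial.aeval x (p i) * y i) :
    ∀ i, (p i ≠ 0 → a ≠ 0 ∧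
        (μ : ℤ) * ((p i).natDegree : ℤ) ≤ D.deltaZ Pinf A a - D.deltaZ Pinf A (y i)) ∧
      D.deltaZ Pinf A a - D.deltaZ Pinf A (y i) ≤ D.deltaZ Pinf A a + D.degDiv A := by
  intro i
  obtain ⟨hyYa, hy0, -, -⟩ := hy i
  refine ⟨fun hpi => ?_, by linarith [neg_degDiv_le_deltaZ hPinf hyYa hy0]⟩
  have hle := hy.valuation_sum_le hμpos hxv p i
  rw [← hrep, valuation_aeval_mul (by omega) hpi hy0] at hle
  have ha0 : a ≠ 0 := by
    rintro rfl
    rw [AddValuation.map_zero, top_le_iff] at hle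
    exact WithTop.coe_ne_top hle
  rw [valuation_of_ne_zero ha0, WithTop.coe_le_coe, hxv] at hle
  exact ⟨ha0, by unfold deltaZ; linarith⟩

open FnF in
/-- Let `A` be a divisor of `F` and `a = Σ_{i<μ} aᵢ·y_i^{(A)} ∈ Я(A)`
with `aᵢ ∈ 𝔽_q[x]`. Then for every `i`,
`deg aᵢ ≤ (δ_A(a) − δ_A(y_i^{(A)}))/μ ≤ (δ_A(a) + deg A)/μ`.
(The first inequality is stated multiplied through by `μ`, for nonzero `aᵢ`; a nonzero
coefficient forces `a ≠ 0`, matching the convention `δ_A(0) = −∞`; the second inequality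
is the inequality `δ_A(a) − δ_A(y_i^{(A)}) ≤ δ_A(a) + deg A` of the numerators.) -/
theorem coefficient_degree_bound
    {Fq : Type} [Field Fq] [Fintype Fq] (D : FnF Fq)
    (Pinf : D.Place) (hPinf : D.degPlace Pinf = 1)
    (μ : ℕ) (hμpos : 0 < μ) (hμmem : (μ : ℤ) ∈ D.WSemigroup Pinf)
    (hμmin : ∀ m : ℤ, 0 < m → m ∈ D.WSemigroup Pinf → (μ : ℤ) ≤ m)
    (x : D.F) (hxv : D.v Pinf x = -(μ : ℤ)) (hxreg : ∀ P, P ≠ Pinf → 0 ≤ D.v P x)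
    (A : D.Divisor) (y : Fin μ → D.F) (hy : D.IsApery Pinf μ A y)
    (a : D.F) (ha : a ∈ D.Ya Pinf A)
    (p : Fin μ → Polynomial Fq) (hrep : a = ∑ i, Polynomial.aeval x (p i) * y i) :
    ∀ i, (p i ≠ 0 → a ≠ 0 ∧
        (μ : ℤ) * ((p i).natDegree : ℤ) ≤ D.deltaZ Pinf A a - D.deltaZ Pinf A (y i)) ∧
      D.deltaZ Pinf A a - D.deltaZ Pinf A (y i) ≤ D.deltaZ Pinf A a + D.degDiv A :=
  coefficient_degree_bound_general D Pinf hPinf μ hμpos x hxv A y hy a p hrep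
end
end

section
/- Let r = (r_1,…,r_n) ∈ 𝔽_q^n be a received word and let Q ∈ M_{s,ℓ}(D,G) satisfy δ_G(Q) < s(n − τ). If f ∈ L(G) is such that the Hamming weight of r − ev_D(f) is at most τ, then Q(f) = 0. -/
noncomputable section

open Polynomial
attribute [local instance] Classical.propDecidable

namespace FnF

variable {Fq : Type} [Field Fq] (D : FnF Fq)

/-- The `b`-th coefficient `Q_b ∈ F` of the expansion `Q(z) = Σ_b Q_b (z − r)^b` of a
polynomial `Q ∈ F[z]` around `r ∈ 𝔽_q`. -/
def taylorCoeff (r : Fq) (Q : Polynomial D.F) (b : ℕ) : D.F :=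
  (Q.comp (Polynomial.X + Polynomial.C (algebraMap Fq D.F r))).coeff b

/-- `Q ∈ F[z]` has a root of multiplicity at least `s` at `(P, r)`: writing
`Q = Σ_b Q_b (z − r)^b`, every coefficient satisfies `v_P(Q_b) ≥ s − b`. This is
equivalent to the expansion `Q = Σ_{a+b≥s} c_{a,b} φ^a (z−r)^b` in any local
parameter `φ` of `P`. -/
def HasRootMultAtLeast (P : D.Place) (r : Fq) (Q : Polynomial D.F) (s : ℕ) : Prop :=
  ∀ b : ℕ, D.taylorCoeff r Q b = 0 ∨ (s : ℤ) - b ≤ D.v P (D.taylorCoeff r Q b)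

/-- `Q ∈ F[z]` has a root of multiplicity exactly `s` at `(P, r)`: in addition to
multiplicity at least `s`, some coefficient with `b ≤ s` satisfies `v_P(Q_b) = s − b`
(i.e. `c_{a,s−a} ≠ 0` for some `0 ≤ a ≤ s`). -/
def HasRootMult (P : D.Place) (r : Fq) (Q : Polynomial D.F) (s : ℕ) : Prop :=
  D.HasRootMultAtLeast P r Q s ∧
    ∃ b ≤ s, D.taylorCoeff r Q b ≠ 0 ∧ D.v P (D.taylorCoeff r Q b) = (s : ℤ) - b

end FnF

namespace FnF

variable {Fq : Type} [Field Fq] (D : FnF Fq)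

/-- The Guruswami–Sudan interpolation module `M_{s,ℓ}(D,G)` for the received word `r`:
all `Q = Σ_{t=0}^ℓ z^t Q^{(t)} ∈ F[z]` with `Q^{(t)} ∈ Я(−tG)` having a root of
multiplicity at least `s` at `(P_j, r_j)` for `j = 1,…,n`. -/
def Minterp (Pinf : D.Place) {n : ℕ} (Ps : Fin n → D.Place) (r : Fin n → Fq)
    (G : D.Divisor) (s ℓ : ℕ) : Set (Polynomial D.F) :=
  {Q | Q.natDegree ≤ ℓ ∧ (∀ t : ℕ, Q.coeff t ∈ D.Ya Pinf ((-(t : ℤ)) • G)) ∧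
    ∀ j, D.HasRootMultAtLeast (Ps j) (r j) Q s}

/-- `δ_G(Q) = max_t δ_{−tG}(Q^{(t)})` for `Q = Σ_{t=0}^ℓ z^t Q^{(t)}`. -/
def deltaG (Pinf : D.Place) (G : D.Divisor) (ℓ : ℕ) (Q : Polynomial D.F) : WithBot ℤ :=
  (Finset.range (ℓ + 1)).sup fun t => D.delta Pinf ((-(t : ℤ)) • G) (Q.coeff t)

end FnF

namespace FnF

variable {Fq : Type} [Field Fq] (D : FnF Fq)

lemma v_one' (P : D.Place) : D.v P (1 : D.F) = 0 := by
  have := D.v_const P 1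
  simpa using this

lemma v_pow' (P : D.Place) (f : D.F) (hf : f ≠ 0) (t : ℕ) :
    D.v P (f ^ t) = (t : ℤ) * D.v P f := by
  induction t with
  | zero => simpa using D.v_one' P
  | succ t ih =>
    rw [pow_succ, D.v_mul P _ _ (pow_ne_zero t hf) hf, ih]
    push_cast; ring

lemma val_sum' {ι : Type} (P : D.Place) (c : ℤ) (S : Finset ι) (F : ι → D.F)
    (h : ∀ i ∈ S, F i = 0 ∨ c ≤ D.v P (F i)) :
    (∑ i ∈ S, F i) = 0 ∨ c ≤ D.v P (∑ i ∈ S, F i) := by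
  have main : (∑ i ∈ S, F i) = 0 ∨ ((∑ i ∈ S, F i) ≠ 0 ∧ c ≤ D.v P (∑ i ∈ S, F i)) := by
    refine Finset.sum_induction F (fun x => x = 0 ∨ (x ≠ 0 ∧ c ≤ D.v P x)) ?_ (Or.inl rfl) ?_
    · intro x y hx hy
      rcases hx with rfl | ⟨hx0, hx⟩
      · simpa using hy
      rcases hy with rfl | ⟨hy0, hy⟩
      · simpa using Or.inr ⟨hx0, hx⟩
      by_cases hxy : x + y = 0
      · exact Or.inl hxy
      · refine Or.inr ⟨hxy, le_trans (le_min hx hy) (D.v_add P x y hxy hx0 hy0)⟩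
    · intro i hi
      by_cases h0 : F i = 0
      · exact Or.inl h0
      · rcases h i hi with h' | h'
        · exact Or.inl h'
        · exact Or.inr ⟨h0, h'⟩
  rcases main with h | ⟨_, h⟩
  · exact Or.inl h
  · exact Or.inr h

end FnF

set_option maxHeartbeats 1600000 in
open FnF in
/-- Guruswami–Sudan. Let `r = (r_1,…,r_n) ∈ 𝔽_q^n` be a received word
and let `Q ∈ M_{s,ℓ}(D,G)` satisfy `δ_G(Q) < s(n − τ)`. If `f ∈ L(G)` is such that the
Hamming weight of `r − ev_D(f)` is at most `τ`, then `Q(f) = 0`. -/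
theorem guruswami_sudan
    {Fq : Type} [Field Fq] [Fintype Fq] (D : FnF Fq)
    (Pinf : D.Place) (hPinf : D.degPlace Pinf = 1)
    (n : ℕ) (Ps : Fin n → D.Place) (hPsinj : Function.Injective Ps)
    (hPsrat : ∀ j, D.degPlace (Ps j) = 1) (hPsne : ∀ j, Ps j ≠ Pinf)
    (G : D.Divisor) (hdisj : ∀ j, G (Ps j) = 0)
    (s ℓ τ : ℕ) (hs : 0 < s) (hsl : s ≤ ℓ)
    (r : Fin n → Fq)
    (Q : Polynomial D.F) (hQ : Q ∈ D.Minterp Pinf Ps r G s ℓ)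
    (hδ : D.deltaG Pinf G ℓ Q < (((s : ℤ) * ((n : ℤ) - (τ : ℤ)) : ℤ) : WithBot ℤ))
    (f : D.F) (hf : f ∈ D.RRmod G)
    (hwt : ((Finset.univ.filter fun j => r j ≠ D.eval (Ps j) f).card : ℕ) ≤ τ) :
    Q.eval f = 0 := by
  classical
  by_contra hg
  obtain ⟨hdeg, hYa, hroot⟩ := hQ
  set M : ℤ := (s : ℤ) * ((n : ℤ) - (τ : ℤ)) - 1 with hM
  -- valuation bound at Pinf from the delta hypothesis
  have hPinfB : ∀ t : ℕ, t ≤ ℓ → Q.coeff t ≠ 0 →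
      (t : ℤ) * G Pinf - M ≤ D.v Pinf (Q.coeff t) := by
    intro t ht hc
    have h1 : D.delta Pinf ((-(t : ℤ)) • G) (Q.coeff t) ≤
        (Finset.range (ℓ + 1)).sup (fun u => D.delta Pinf ((-(u : ℤ)) • G) (Q.coeff u)) :=
      Finset.le_sup (f := fun u : ℕ => D.delta Pinf ((-(u : ℤ)) • G) (Q.coeff u))
        (Finset.mem_range.mpr (Nat.lt_succ_of_le ht))
    have h2 := lt_of_le_of_lt h1 hδ
    rw [FnF.delta, if_neg hc] at h2
    have h3 : D.deltaZ Pinf ((-(t : ℤ)) • G) (Q.coeff t) < (s : ℤ) * ((n : ℤ) - (τ : ℤ)) := by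
      exact_mod_cast h2
    rw [FnF.deltaZ] at h3
    have h4 : ((-(t : ℤ)) • G) Pinf = -(t : ℤ) * G Pinf := by
      rw [Finsupp.smul_apply, smul_eq_mul]
    rw [h4] at h3
    linarith
  -- valuation bound away from Pinf from membership in Ya
  have hYaB : ∀ t : ℕ, Q.coeff t ≠ 0 → ∀ P, P ≠ Pinf →
      (t : ℤ) * G P ≤ D.v P (Q.coeff t) := by
    intro t hc P hP
    obtain ⟨m, hm⟩ := hYa t
    rw [D.mem_RRmod] at hm
    rcases hm with h | h
    · exact absurd h hc
    have h' := h P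
    rw [Finsupp.add_apply, Finsupp.single_apply, if_neg (fun h'' => hP h''.symm),
      Finsupp.smul_apply, smul_eq_mul] at h'
    linarith
  -- valuation bound on f
  have hvfB : f ≠ 0 → ∀ P, -(G P) ≤ D.v P f := by
    intro hf0 P
    rw [D.mem_RRmod] at hf
    rcases hf with h | h
    · exact absurd h hf0
    · have := h P; linarith
  -- the sets of good and bad positions
  set bad : Finset (Fin n) := Finset.univ.filter (fun j => r j ≠ D.eval (Ps j) f) with hbad
  set good : Finset (Fin n) := Finset.univ.filter (fun j => r j = D.eval (Ps j) f) with hgood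
  have hcard : good.card + bad.card = n := by
    have := Finset.card_filter_add_card_filter_not
      (s := (Finset.univ : Finset (Fin n))) (p := fun j => r j = D.eval (Ps j) f)
    simpa [hgood, hbad] using this
  -- the divisor A
  set A : D.Divisor :=
    Finsupp.single Pinf M + ∑ j ∈ good, Finsupp.single (Ps j) (-(s : ℤ)) with hA
  have hA_Pinf : A Pinf = M := by
    rw [hA, Finsupp.add_apply, Finsupp.single_eq_same, Finsupp.finset_sum_apply]
    rw [Finset.sum_eq_zero, add_zero]
    intro j _
    rw [Finsupp.single_apply, if_neg (hPsne j)]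
  have hA_good : ∀ j ∈ good, A (Ps j) = -(s : ℤ) := by
    intro j hj
    rw [hA, Finsupp.add_apply, Finsupp.single_apply,
      if_neg (fun h => hPsne j h.symm), Finsupp.finset_sum_apply, zero_add]
    rw [Finset.sum_eq_single_of_mem j hj]
    · rw [Finsupp.single_eq_same]
    · intro j' _ hne
      rw [Finsupp.single_apply, if_neg (fun h => hne (hPsinj h))]
  have hA_other : ∀ P, P ≠ Pinf → (∀ j ∈ good, P ≠ Ps j) → A P = 0 := by
    intro P hP h
    rw [hA, Finsupp.add_apply, Finsupp.single_apply, if_neg (fun h'' => hP h''.symm),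
      Finsupp.finset_sum_apply, zero_add]
    refine Finset.sum_eq_zero fun j hj => ?_
    rw [Finsupp.single_apply, if_neg (fun h'' => h j hj h''.symm)]
  -- degree of A
  have hadd : ∀ A B : D.Divisor, D.degDiv (A + B) = D.degDiv A + D.degDiv B := by
    intro A B
    exact Finsupp.sum_add_index' (fun a => zero_mul _) (fun a b₁ b₂ => add_mul _ _ _)
  have hsingle : ∀ (P : D.Place) (m : ℤ),
      D.degDiv (Finsupp.single P m) = m * (D.degPlace P : ℤ) := by
    intro P m
    exact Finsupp.sum_single_index (zero_mul _)
  have hdegA : D.degDiv A = M - (s : ℤ) * good.card := by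
    have hφ : D.degDiv (∑ j ∈ good, Finsupp.single (Ps j) (-(s : ℤ))) =
        ∑ j ∈ good, D.degDiv (Finsupp.single (Ps j) (-(s : ℤ))) :=
      map_sum (AddMonoidHom.mk' D.degDiv hadd) _ _
    rw [hA, hadd, hφ, hsingle, hPinf]
    have : ∀ j ∈ good, D.degDiv (Finsupp.single (Ps j) (-(s : ℤ))) = -(s : ℤ) := by
      intro j _
      rw [hsingle, hPsrat j]
      simp
    rw [Finset.sum_congr rfl this, Finset.sum_const, nsmul_eq_mul]
    push_cast
    ring
  have hdegA_neg : D.degDiv A < 0 := by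
    have h1 : (n : ℤ) - (τ : ℤ) ≤ (good.card : ℤ) := by omega
    have h2 : (s : ℤ) * ((n : ℤ) - (τ : ℤ)) ≤ (s : ℤ) * good.card :=
      mul_le_mul_of_nonneg_left h1 (by positivity)
    rw [hdegA]; linarith
  -- membership of Q.eval f in RRmod A
  have hmem : Q.eval f ∈ D.RRmod A := by
    rw [D.mem_RRmod]
    right
    intro P
    by_cases hcase : ∃ j ∈ good, P = Ps j
    · obtain ⟨j, hj, rfl⟩ := hcase
      have hj' : r j = D.eval (Ps j) f := by
        have := Finset.mem_filter.mp (hgood ▸ hj)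
        exact this.2
      set r' : D.F := algebraMap Fq D.F (r j) with hr'
      set y : D.F := f - r' with hy
      have hPdeg : D.degPlace (Ps j) = 1 := hPsrat j
      have hvr' : D.v (Ps j) r' = 0 := D.v_const (Ps j) (r j)
      have hvf0 : 0 ≤ D.v (Ps j) f := by
        by_cases hf0 : f = 0
        · rw [hf0, D.v_zero]
        · have := hvfB hf0 (Ps j); have hG := hdisj j; omega
      have hvy : y ≠ 0 → 0 ≤ D.v (Ps j) y := by
        intro hyne
        by_cases hf0 : f = 0
        · have : y = -r' := by rw [hy, hf0, zero_sub]
          rw [this, D.v_neg, hvr']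
        by_cases hr0 : r j = 0
        · have : y = f := by rw [hy, hr', hr0, map_zero, sub_zero]
          rw [this]; exact hvf0
        have hr'0 : r' ≠ 0 := by
          rw [hr']
          exact fun h => hr0 ((_root_.map_eq_zero (algebraMap Fq D.F)).mp h)
        have := D.v_add (Ps j) f (-r') (by rwa [← sub_eq_add_neg, ← hy]) hf0
          (neg_ne_zero.mpr hr'0)
        rw [← sub_eq_add_neg, ← hy, D.v_neg, hvr'] at this
        exact le_trans (le_min hvf0 le_rfl) this
      have heval_y : D.eval (Ps j) y = 0 := by
        have h1 : D.eval (Ps j) (f + -r') = D.eval (Ps j) f + D.eval (Ps j) (-r') :=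
          D.eval_add (Ps j) f (-r') hPdeg hvf0 (by rw [D.v_neg, hvr'])
        have h2 : D.eval (Ps j) (-r') = -(r j) := by
          have : (-r' : D.F) = algebraMap Fq D.F (-(r j)) := by rw [map_neg]
          rw [this, D.eval_const (Ps j) _ hPdeg]
        rw [← sub_eq_add_neg, ← hy] at h1
        rw [h1, h2, ← hj']
        ring
      have hvy1 : y ≠ 0 → 1 ≤ D.v (Ps j) y := by
        intro hyne
        rcases (D.eval_eq_zero_iff (Ps j) y hPdeg (hvy hyne)).mp heval_y with h | h
        · exact absurd h hyne
        · exact h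
      set R : Polynomial D.F := Q.comp (Polynomial.X + Polynomial.C r') with hR
      have hgR : Q.eval f = ∑ b ∈ Finset.range (R.natDegree + 1), R.coeff b * y ^ b := by
        have h1 : R.eval y = Q.eval f := by
          rw [hR, Polynomial.eval_comp]
          congr 1
          simp [hy]
        rw [← h1, Polynomial.eval_eq_sum_range]
      have htay : ∀ b : ℕ, D.taylorCoeff (r j) Q b = R.coeff b := fun b => rfl
      have hterm : ∀ b ∈ Finset.range (R.natDegree + 1),
          R.coeff b * y ^ b = 0 ∨ (s : ℤ) ≤ D.v (Ps j) (R.coeff b * y ^ b) := by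
        intro b _
        by_cases hcb : R.coeff b = 0
        · left; rw [hcb, zero_mul]
        by_cases hyne : y = 0
        · rcases Nat.eq_zero_or_pos b with rfl | hb
          · right
            rcases hroot j 0 with h | h
            · rw [htay 0] at h; exact absurd h hcb
            · rw [htay 0] at h
              simpa using h
          · left; rw [hyne, zero_pow (by omega), mul_zero]
        · right
          rcases hroot j b with h | h
          · rw [htay b] at h; exact absurd h hcb
          rw [htay b] at h
          have hyb : D.v (Ps j) (y ^ b) = (b : ℤ) * D.v (Ps j) y := D.v_pow' (Ps j) y hyne b
          have hmul : D.v (Ps j) (R.coeff b * y ^ b) =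
              D.v (Ps j) (R.coeff b) + D.v (Ps j) (y ^ b) :=
            D.v_mul (Ps j) _ _ hcb (pow_ne_zero b hyne)
          have h1 : (1 : ℤ) ≤ D.v (Ps j) y := hvy1 hyne
          have h2 : (b : ℤ) ≤ (b : ℤ) * D.v (Ps j) y := by
            nlinarith [Int.natCast_nonneg b]
          rw [hmul, hyb]
          linarith
      rcases D.val_sum' (Ps j) (s : ℤ) _ _ hterm with h0 | hv
      · rw [← hgR] at h0; exact absurd h0 hg
      · rw [← hgR] at hv
        rw [hA_good j hj]
        linarith
    · push_neg at hcase
      by_cases hPinfc : P = Pinf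
      · subst hPinfc
        have hgsum : Q.eval f = ∑ t ∈ Finset.range (Q.natDegree + 1), Q.coeff t * f ^ t :=
          Polynomial.eval_eq_sum_range f
        have hterm : ∀ t ∈ Finset.range (Q.natDegree + 1),
            Q.coeff t * f ^ t = 0 ∨ -M ≤ D.v P (Q.coeff t * f ^ t) := by
          intro t ht
          have htl : t ≤ ℓ := le_trans (Nat.lt_succ_iff.mp (Finset.mem_range.mp ht)) hdeg
          by_cases hc : Q.coeff t = 0
          · left; rw [hc, zero_mul]
          by_cases hft : f ^ t = 0
          · left; rw [hft, mul_zero]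
          right
          have h1 := hPinfB t htl hc
          have h2 : -((t : ℤ) * G P) ≤ D.v P (f ^ t) := by
            by_cases hf0 : f = 0
            · have ht0 : t = 0 := by
                by_contra h'
                exact hft (by rw [hf0, zero_pow h'])
              subst ht0
              rw [pow_zero, D.v_one']
              simp
            · rw [D.v_pow' P f hf0 t]
              have := hvfB hf0 P
              nlinarith [Int.natCast_nonneg t]
          rw [D.v_mul P _ _ hc hft]
          linarith
        rcases D.val_sum' P (-M) _ _ hterm with h0 | hv
        · rw [← hgsum] at h0; exact absurd h0 hg
        · rw [← hgsum] at hv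
          rw [hA_Pinf]
          linarith
      · have hgsum : Q.eval f = ∑ t ∈ Finset.range (Q.natDegree + 1), Q.coeff t * f ^ t :=
          Polynomial.eval_eq_sum_range f
        have hterm : ∀ t ∈ Finset.range (Q.natDegree + 1),
            Q.coeff t * f ^ t = 0 ∨ (0 : ℤ) ≤ D.v P (Q.coeff t * f ^ t) := by
          intro t _
          by_cases hc : Q.coeff t = 0
          · left; rw [hc, zero_mul]
          by_cases hft : f ^ t = 0
          · left; rw [hft, mul_zero]
          right
          have h1 := hYaB t hc P hPinfc
          have h2 : -((t : ℤ) * G P) ≤ D.v P (f ^ t) := by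
            by_cases hf0 : f = 0
            · have ht0 : t = 0 := by
                by_contra h'
                exact hft (by rw [hf0, zero_pow h'])
              subst ht0
              rw [pow_zero, D.v_one']
              simp
            · rw [D.v_pow' P f hf0 t]
              have := hvfB hf0 P
              nlinarith [Int.natCast_nonneg t]
          rw [D.v_mul P _ _ hc hft]
          linarith
        rcases D.val_sum' P 0 _ _ hterm with h0 | hv
        · rw [← hgsum] at h0; exact absurd h0 hg
        · rw [← hgsum] at hv
          rw [hA_other P hPinfc (fun j hj h => hcase j hj h)]
          linarith
  rw [D.RRmod_eq_bot A (show D.degDiv A < 0 from hdegA_neg), Submodule.mem_bot] at hmem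
  exact hg hmem
end
end

section
/- Let r = (r_1,…,r_n) ∈ 𝔽_q^n be a received word and let R ∈ Я(G) satisfy R(P_j) = r_j for j = 1,…,n. Then M_{s,ℓ}(D,G) = ⊕_{t=0}^{ℓ} (z − R)^t Я(G_t), where G_t = −tG − max{0, s−t}D. -/
noncomputable section

open Polynomial
attribute [local instance] Classical.propDecidable

namespace FnF

variable {Fq : Type} [Field Fq] (D : FnF Fq)

/-- The divisor `D = P_1 + ⋯ + P_n` of the evaluation places. -/
def Ddiv {n : ℕ} (Ps : Fin n → D.Place) : D.Divisor :=
  ∑ j, Finsupp.single (Ps j) (1 : ℤ)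

/-- The divisor `G_t = −tG − max{0, s−t}·D`. -/
def Gdiv {n : ℕ} (Ps : Fin n → D.Place) (G : D.Divisor) (s : ℕ) (t : ℕ) : D.Divisor :=
  (-(t : ℤ)) • G - (max 0 ((s : ℤ) - (t : ℤ))) • D.Ddiv Ps

end FnF

namespace FnF

variable {Fq : Type} [Field Fq] {D : FnF Fq}

/-- `f` is zero or has valuation at least `c` at `P`. -/
def VQ (D : FnF Fq) (P : D.Place) (c : ℤ) (f : D.F) : Prop :=
  f = 0 ∨ c ≤ D.v P f

lemma vq_zero (P : D.Place) (c : ℤ) : D.VQ P c (0 : D.F) := Or.inl rfl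

lemma VQ.mono {P : D.Place} {c c' : ℤ} {f : D.F} (h : D.VQ P c f) (hc : c' ≤ c) :
    D.VQ P c' f :=
  h.imp id (le_trans hc)

lemma VQ.add {P : D.Place} {c : ℤ} {f g : D.F} (hf : D.VQ P c f) (hg : D.VQ P c g) :
    D.VQ P c (f + g) := by
  by_cases hf0 : f = 0
  · subst hf0; rw [zero_add]; exact hg
  by_cases hg0 : g = 0
  · subst hg0; rw [add_zero]; exact hf
  by_cases h0 : f + g = 0
  · exact Or.inl h0
  refine Or.inr ?_
  have hf' : c ≤ D.v P f := hf.resolve_left hf0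
  have hg' : c ≤ D.v P g := hg.resolve_left hg0
  exact le_trans (le_min hf' hg') (D.v_add P f g h0 hf0 hg0)

lemma VQ.mul {P : D.Place} {c d : ℤ} {f g : D.F} (hf : D.VQ P c f) (hg : D.VQ P d g) :
    D.VQ P (c + d) (f * g) := by
  by_cases hf0 : f = 0
  · subst hf0; rw [zero_mul]; exact vq_zero P _
  by_cases hg0 : g = 0
  · subst hg0; rw [mul_zero]; exact vq_zero P _
  refine Or.inr ?_
  rw [D.v_mul P f g hf0 hg0]
  exact add_le_add (hf.resolve_left hf0) (hg.resolve_left hg0)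

lemma VQ.neg {P : D.Place} {c : ℤ} {f : D.F} (h : D.VQ P c f) : D.VQ P c (-f) := by
  by_cases h0 : f = 0
  · subst h0; rw [neg_zero]; exact Or.inl rfl
  · exact Or.inr (by rw [D.v_neg]; exact h.resolve_left h0)

lemma VQ.max' {P : D.Place} {c d : ℤ} {f : D.F} (h1 : D.VQ P c f) (h2 : D.VQ P d f) :
    D.VQ P (max c d) f := by
  by_cases h0 : f = 0
  · exact Or.inl h0
  · exact Or.inr (max_le (h1.resolve_left h0) (h2.resolve_left h0))

lemma vq_const (P : D.Place) (a : Fq) : D.VQ P 0 (algebraMap Fq D.F a) :=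
  Or.inr (by rw [D.v_const])

lemma vq_one (P : D.Place) : D.VQ P 0 (1 : D.F) := by
  have : (1 : D.F) = algebraMap Fq D.F 1 := (map_one _).symm
  rw [this]; exact vq_const P 1

lemma vq_natCast (P : D.Place) (k : ℕ) : D.VQ P 0 ((k : ℕ) : D.F) := by
  have : ((k : ℕ) : D.F) = algebraMap Fq D.F (k : Fq) := (map_natCast (algebraMap Fq D.F) k).symm
  rw [this]; exact vq_const P _

lemma VQ.pow {P : D.Place} {c : ℤ} {f : D.F} (hf : D.VQ P c f) (k : ℕ) :
    D.VQ P ((k : ℤ) * c) (f ^ k) := by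
  induction k with
  | zero =>
      rw [pow_zero]
      exact (vq_one P).mono (by simp)
  | succ k ih =>
      have h2 := ih.mul hf
      rw [← pow_succ] at h2
      refine h2.mono (le_of_eq ?_)
      push_cast; ring

lemma vq_sum {ι : Type*} (S : Finset ι) (f : ι → D.F) (P : D.Place) (c : ℤ)
    (h : ∀ i ∈ S, D.VQ P c (f i)) : D.VQ P c (∑ i ∈ S, f i) := by
  classical
  induction S using Finset.induction_on with
  | empty => rw [Finset.sum_empty]; exact vq_zero P c
  | insert _ _ hnot ih =>
      rename_i a S'
      rw [Finset.sum_insert hnot]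
      exact (h a (Finset.mem_insert_self a S')).add
        (ih fun i hi => h i (Finset.mem_insert_of_mem hi))

/-- Characterization of membership in `Я(A)`: away from `P∞`, the valuation is
bounded below by `-A`. -/
lemma mem_Ya_iff {Pinf : D.Place} {A : D.Divisor} {f : D.F} :
    f ∈ D.Ya Pinf A ↔ ∀ P, P ≠ Pinf → D.VQ P (-(A P)) f := by
  constructor
  · rintro ⟨m, hm⟩ P hP
    rcases (D.mem_RRmod _ f).1 hm with h0 | h
    · exact Or.inl h0
    · refine Or.inr ?_
      have h1 := h P
      rw [Finsupp.add_apply, Finsupp.single_apply, if_neg (fun h => hP h.symm)] at h1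
      omega
  · intro hf
    by_cases h0 : f = 0
    · exact ⟨0, (D.mem_RRmod _ f).2 (Or.inl h0)⟩
    · refine ⟨-(D.v Pinf f) - A Pinf, (D.mem_RRmod _ f).2 (Or.inr fun P => ?_)⟩
      rw [Finsupp.add_apply, Finsupp.single_apply]
      by_cases hP : P = Pinf
      · subst hP; rw [if_pos rfl]; omega
      · rw [if_neg (fun h => hP h.symm)]
        have h2 := (hf P hP).resolve_left h0
        omega

lemma Ddiv_apply_eq {n : ℕ} {Ps : Fin n → D.Place} (hinj : Function.Injective Ps)
    (j : Fin n) : D.Ddiv Ps (Ps j) = 1 := by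
  rw [Ddiv, Finsupp.finset_sum_apply]
  rw [Finset.sum_eq_single j]
  · rw [Finsupp.single_apply, if_pos rfl]
  · intro k _ hk
    rw [Finsupp.single_apply, if_neg (fun h => hk (hinj h))]
  · intro h; exact absurd (Finset.mem_univ j) h

lemma Ddiv_apply_ne {n : ℕ} {Ps : Fin n → D.Place} {P : D.Place}
    (hP : ∀ j, Ps j ≠ P) : D.Ddiv Ps P = 0 := by
  rw [Ddiv, Finsupp.finset_sum_apply]
  refine Finset.sum_eq_zero fun j _ => ?_
  rw [Finsupp.single_apply, if_neg (hP j)]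

lemma Ddiv_nonneg {n : ℕ} (Ps : Fin n → D.Place) (P : D.Place) :
    0 ≤ D.Ddiv Ps P := by
  rw [Ddiv, Finsupp.finset_sum_apply]
  refine Finset.sum_nonneg fun j _ => ?_
  rw [Finsupp.single_apply]
  split <;> norm_num

lemma neg_Gdiv_apply {n : ℕ} (Ps : Fin n → D.Place) (G : D.Divisor) (s t : ℕ)
    (P : D.Place) :
    -(D.Gdiv Ps G s t P) = (t : ℤ) * G P + max 0 ((s : ℤ) - t) * D.Ddiv Ps P := by
  rw [Gdiv, Finsupp.sub_apply, Finsupp.smul_apply, Finsupp.smul_apply,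
    smul_eq_mul, smul_eq_mul]
  ring

lemma taylor_coeff_sum (c : D.F) (Q : Polynomial D.F) (N : ℕ) (hN : Q.natDegree < N)
    (t : ℕ) :
    (Polynomial.taylor c Q).coeff t
      = ∑ u ∈ Finset.range N, Q.coeff u * (c ^ (u - t) * ((u.choose t : ℕ) : D.F)) := by
  conv_lhs => rw [Q.as_sum_range' N hN]
  rw [map_sum, Polynomial.finset_sum_coeff]
  refine Finset.sum_congr rfl fun u hu => ?_
  rw [Polynomial.taylor_monomial, Polynomial.coeff_C_mul, Polynomial.coeff_X_add_C_pow]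

/-- Master valuation bound for Taylor coefficients. -/
lemma vq_taylor (P : D.Place) (c : D.F) (Q : Polynomial D.F) (N : ℕ)
    (hN : Q.natDegree < N) (γ : ℕ → ℤ) (e : ℤ) (t : ℕ) (β : ℤ)
    (hQ : ∀ u, D.VQ P (γ u) (Q.coeff u)) (hc : D.VQ P e c)
    (hβ : ∀ u, t ≤ u → β ≤ γ u + ((u - t : ℕ) : ℤ) * e) :
    D.VQ P β ((Polynomial.taylor c Q).coeff t) := by
  rw [taylor_coeff_sum c Q N hN t]
  refine vq_sum _ _ _ _ fun u _ => ?_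
  by_cases hut : t ≤ u
  · refine ((hQ u).mul ((hc.pow (u - t)).mul (vq_natCast P (u.choose t)))).mono ?_
    have := hβ u hut
    omega
  · have h0 : u.choose t = 0 := Nat.choose_eq_zero_of_lt (lt_of_not_ge hut)
    rw [h0, Nat.cast_zero, mul_zero, mul_zero]
    exact vq_zero P β

lemma repr_taylor (R : D.F) {m : ℕ} (h : Fin m → D.F) :
    (∑ t : Fin m, Polynomial.C (h t) * (Polynomial.X - Polynomial.C R) ^ (t : ℕ))
      = Polynomial.taylor (-R)
          (∑ t : Fin m, Polynomial.C (h t) * Polynomial.X ^ (t : ℕ)) := by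
  rw [map_sum]
  refine Finset.sum_congr rfl fun t _ => ?_
  rw [Polynomial.taylor_apply, Polynomial.mul_comp, Polynomial.C_comp,
    Polynomial.pow_comp, Polynomial.X_comp, Polynomial.C_neg, ← sub_eq_add_neg]

lemma coeff_hsum {m : ℕ} (h : Fin m → D.F) (u : ℕ) :
    (∑ t : Fin m, Polynomial.C (h t) * Polynomial.X ^ (t : ℕ)).coeff u
      = if hu : u < m then h ⟨u, hu⟩ else 0 := by
  rw [Polynomial.finset_sum_coeff]
  by_cases hu : u < m
  · rw [dif_pos hu, Finset.sum_eq_single (⟨u, hu⟩ : Fin m)]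
    · rw [Polynomial.coeff_C_mul, Polynomial.coeff_X_pow, if_pos rfl, mul_one]
    · intro t _ ht
      rw [Polynomial.coeff_C_mul, Polynomial.coeff_X_pow,
        if_neg (fun he => ht (Fin.ext he.symm)), mul_zero]
    · intro hmem; exact absurd (Finset.mem_univ _) hmem
  · rw [dif_neg hu]
    refine Finset.sum_eq_zero fun t _ => ?_
    rw [Polynomial.coeff_C_mul, Polynomial.coeff_X_pow,
      if_neg (fun he => hu (by rw [he]; exact t.isLt)), mul_zero]

lemma natDegree_hsum_le {m : ℕ} (h : Fin m → D.F) {ℓ : ℕ} (hm : m ≤ ℓ + 1) :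
    (∑ t : Fin m, Polynomial.C (h t) * Polynomial.X ^ (t : ℕ)).natDegree ≤ ℓ := by
  refine Polynomial.natDegree_le_iff_coeff_eq_zero.2 fun N hN => ?_
  rw [coeff_hsum, dif_neg (by omega)]

end FnF

open FnF in
/-- Let `r = (r_1,…,r_n) ∈ 𝔽_q^n` be a received word and let `R ∈ Я(G)`
satisfy `R(P_j) = r_j` for `j = 1,…,n`. Then
`M_{s,ℓ}(D,G) = ⊕_{t=0}^{ℓ} (z − R)^t Я(G_t)`, where `G_t = −tG − max{0, s−t}·D`
(the decomposition is a direct sum: the representation exists and summands are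
independent). -/
theorem Minterp_direct_sum_decomposition
    {Fq : Type} [Field Fq] [Fintype Fq] (D : FnF Fq)
    (Pinf : D.Place) (hPinf : D.degPlace Pinf = 1)
    (n : ℕ) (Ps : Fin n → D.Place) (hPsinj : Function.Injective Ps)
    (hPsrat : ∀ j, D.degPlace (Ps j) = 1) (hPsne : ∀ j, Ps j ≠ Pinf)
    (G : D.Divisor) (hdisj : ∀ j, G (Ps j) = 0)
    (s ℓ : ℕ) (hs : 0 < s) (hsl : s ≤ ℓ)
    (r : Fin n → Fq)
    (R : D.F) (hR : R ∈ D.Ya Pinf G) (hRr : ∀ j, D.eval (Ps j) R = r j) :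
    (D.Minterp Pinf Ps r G s ℓ =
      {Q | ∃ h : Fin (ℓ + 1) → D.F,
        (∀ t : Fin (ℓ + 1), h t ∈ D.Ya Pinf (D.Gdiv Ps G s t)) ∧
        Q = ∑ t : Fin (ℓ + 1),
          Polynomial.C (h t) * (Polynomial.X - Polynomial.C R) ^ (t : ℕ)}) ∧
    (∀ h : Fin (ℓ + 1) → D.F,
      (∀ t : Fin (ℓ + 1), h t ∈ D.Ya Pinf (D.Gdiv Ps G s t)) →
      (∑ t : Fin (ℓ + 1),
        Polynomial.C (h t) * (Polynomial.X - Polynomial.C R) ^ (t : ℕ)) = 0 →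
      ∀ t, h t = 0) := by
  classical
  have hvR : ∀ P, P ≠ Pinf → D.VQ P (-(G P)) R := mem_Ya_iff.1 hR
  have hvR0 : ∀ j, D.VQ (Ps j) 0 R := fun j => by
    have h1 := hvR (Ps j) (hPsne j)
    rwa [hdisj j, neg_zero] at h1
  have hvRr : ∀ j, D.VQ (Ps j) 1 (R - algebraMap Fq D.F (r j)) := by
    intro j
    set a := algebraMap Fq D.F (r j) with ha
    by_cases hR0 : R = 0
    · have h00 : D.eval (Ps j) (0 : D.F) = 0 := by
        rw [show (0 : D.F) = algebraMap Fq D.F 0 from (map_zero _).symm,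
          D.eval_const _ _ (hPsrat j)]
      have hr0 : r j = 0 := by rw [← hRr j, hR0, h00]
      exact Or.inl (by rw [hR0, ha, hr0, map_zero, sub_zero])
    · have hvRge : 0 ≤ D.v (Ps j) R := (hvR0 j).resolve_left hR0
      have hva : D.v (Ps j) (-a) = 0 := by rw [D.v_neg, ha, D.v_const]
      by_cases hf0 : R - a = 0
      · exact Or.inl hf0
      have hvf : 0 ≤ D.v (Ps j) (R - a) := by
        by_cases ha0 : a = 0
        · rw [ha0, sub_zero]; exact hvRge
        · have hmin := D.v_add (Ps j) R (-a) (by rwa [← sub_eq_add_neg]) hR0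
            (neg_ne_zero.2 ha0)
          rw [← sub_eq_add_neg] at hmin
          omega
      have hev : D.eval (Ps j) (R - a) = 0 := by
        have he := D.eval_add (Ps j) R (-a) (hPsrat j) hvRge (le_of_eq hva.symm)
        rw [← sub_eq_add_neg] at he
        have hea : D.eval (Ps j) (-a) = -(r j) := by
          rw [ha, ← map_neg, D.eval_const _ _ (hPsrat j)]
        rw [he, hea, hRr j, add_neg_cancel]
      exact Or.inr
        (((D.eval_eq_zero_iff (Ps j) (R - a) (hPsrat j) hvf).1 hev).resolve_left hf0)
  -- the generation direction
  have hgen : ∀ h : Fin (ℓ + 1) → D.F,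
      (∀ t : Fin (ℓ + 1), h t ∈ D.Ya Pinf (D.Gdiv Ps G s t)) →
      (∑ t : Fin (ℓ + 1),
        Polynomial.C (h t) * (Polynomial.X - Polynomial.C R) ^ (t : ℕ))
        ∈ D.Minterp Pinf Ps r G s ℓ := by
    intro h hmem
    rw [repr_taylor]
    set Q0 : Polynomial D.F :=
      ∑ t : Fin (ℓ + 1), Polynomial.C (h t) * Polynomial.X ^ (t : ℕ) with hQ0def
    have hdeg0 : Q0.natDegree ≤ ℓ := natDegree_hsum_le h le_rfl
    have hγ : ∀ P, P ≠ Pinf → ∀ u : ℕ,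
        D.VQ P ((u : ℤ) * G P + max 0 ((s : ℤ) - u) * D.Ddiv Ps P) (Q0.coeff u) := by
      intro P hP u
      rw [hQ0def, coeff_hsum]
      by_cases hu : u < ℓ + 1
      · rw [dif_pos hu]
        have h1 := mem_Ya_iff.1 (hmem ⟨u, hu⟩) P hP
        rw [neg_Gdiv_apply] at h1
        exact h1
      · rw [dif_neg hu]; exact vq_zero P _
    refine ⟨?_, ?_, ?_⟩
    · rw [Polynomial.natDegree_taylor]; exact hdeg0
    · intro u
      rw [mem_Ya_iff]
      intro P hP
      have hb : -(((-(u : ℤ)) • G) P) = (u : ℤ) * G P := by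
        rw [Finsupp.smul_apply, smul_eq_mul]; ring
      rw [hb]
      refine vq_taylor P (-R) Q0 (ℓ + 1) (Nat.lt_succ_of_le hdeg0) _ (-(G P)) u _
        (hγ P hP) ((hvR P hP).neg) ?_
      intro u' hu'
      rw [Nat.cast_sub hu']
      have h1 : (0 : ℤ) ≤ max 0 ((s : ℤ) - u') := le_max_left _ _
      have h2 : (0 : ℤ) ≤ D.Ddiv Ps P := Ddiv_nonneg Ps P
      have h3 : ((u' : ℤ)) * G P + (((u' : ℤ)) - u) * (-(G P)) = (u : ℤ) * G P := by
        ring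
      nlinarith [mul_nonneg h1 h2]
    · intro j b
      show D.VQ (Ps j) ((s : ℤ) - b)
        ((Polynomial.taylor (algebraMap Fq D.F (r j))
          (Polynomial.taylor (-R) Q0)).coeff b)
      rw [Polynomial.taylor_taylor]
      have hc : D.VQ (Ps j) 1 (algebraMap Fq D.F (r j) + -R) := by
        have h4 := (hvRr j).neg
        rwa [neg_sub, sub_eq_add_neg] at h4
      refine vq_taylor (Ps j) _ Q0 (ℓ + 1) (Nat.lt_succ_of_le hdeg0)
        (fun u => max 0 ((s : ℤ) - u)) 1 b _ ?_ hc ?_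
      · intro u
        have h5 := hγ (Ps j) (hPsne j) u
        rwa [hdisj j, mul_zero, zero_add, Ddiv_apply_eq hPsinj, mul_one] at h5
      · intro u hu
        rw [Nat.cast_sub hu]
        beta_reduce
        have hB := le_max_right (0 : ℤ) ((s : ℤ) - u)
        linarith
  constructor
  · ext Q
    simp only [Minterp, Set.mem_setOf_eq]
    constructor
    · rintro ⟨hdeg, hcoeff, hroot⟩
      refine ⟨fun t => (Polynomial.taylor R Q).coeff (t : ℕ), ?_, ?_⟩
      · intro t
        rw [mem_Ya_iff]
        intro P hP
        rw [neg_Gdiv_apply]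
        by_cases hPrange : ∃ j, Ps j = P
        · obtain ⟨j, rfl⟩ := hPrange
          rw [hdisj j, mul_zero, zero_add, Ddiv_apply_eq hPsinj, mul_one]
          set a := algebraMap Fq D.F (r j) with hadef
          have hTT : Polynomial.taylor R Q
              = Polynomial.taylor (R - a) (Polynomial.taylor a Q) := by
            rw [Polynomial.taylor_taylor, sub_add_cancel]
          rw [hTT]
          have hγ0 : ∀ u : ℕ, D.VQ (Ps j) 0 (Q.coeff u) := fun u => by
            have h1 := mem_Ya_iff.1 (hcoeff u) (Ps j) (hPsne j)
            rw [Finsupp.smul_apply, smul_eq_mul, hdisj j, mul_zero, neg_zero] at h1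
            exact h1
          have hγ1 : ∀ b : ℕ, D.VQ (Ps j) 0 ((Polynomial.taylor a Q).coeff b) := by
            intro b
            refine vq_taylor (Ps j) a Q (ℓ + 1) (Nat.lt_succ_of_le hdeg)
              (fun _ => 0) 0 b 0 hγ0 (vq_const (Ps j) (r j)) ?_
            intro u hu; simp
          have hγ2 : ∀ b : ℕ,
              D.VQ (Ps j) ((s : ℤ) - b) ((Polynomial.taylor a Q).coeff b) :=
            fun b => hroot j b
          refine vq_taylor (Ps j) (R - a) (Polynomial.taylor a Q) (ℓ + 1)
            (by rw [Polynomial.natDegree_taylor]; exact Nat.lt_succ_of_le hdeg)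
            (fun b => max 0 ((s : ℤ) - b)) 1 (t : ℕ) _
            (fun b => (hγ1 b).max' (hγ2 b)) (hvRr j) ?_
          intro u hu
          rw [Nat.cast_sub hu]
          beta_reduce
          have hA := le_max_left (0 : ℤ) ((s : ℤ) - u)
          have hB := le_max_right (0 : ℤ) ((s : ℤ) - u)
          apply max_le <;> linarith
        · push_neg at hPrange
          rw [Ddiv_apply_ne hPrange, mul_zero, add_zero]
          have hγ : ∀ u : ℕ, D.VQ P ((u : ℤ) * G P) (Q.coeff u) := fun u => by
            have h1 := mem_Ya_iff.1 (hcoeff u) P hP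
            rwa [Finsupp.smul_apply, smul_eq_mul, neg_mul, neg_neg] at h1
          refine vq_taylor P R Q (ℓ + 1) (Nat.lt_succ_of_le hdeg)
            (fun u => (u : ℤ) * G P) (-(G P)) (t : ℕ) _ hγ (hvR P hP) ?_
          intro u hu
          rw [Nat.cast_sub hu]
          exact le_of_eq (by ring)
      · conv_lhs => rw [← Polynomial.sum_taylor_eq Q R]
        rw [Polynomial.sum_over_range' (Polynomial.taylor R Q)
          (fun n => by simp) (ℓ + 1)
          (by rw [Polynomial.natDegree_taylor]; exact Nat.lt_succ_of_le hdeg)]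
        exact (Fin.sum_univ_eq_sum_range
          (fun i => Polynomial.C ((Polynomial.taylor R Q).coeff i) *
            (Polynomial.X - Polynomial.C R) ^ i) (ℓ + 1)).symm
    · rintro ⟨h, hmem, rfl⟩
      exact hgen h hmem
  · intro h hmem hzero t
    rw [repr_taylor] at hzero
    have hQ00 : (∑ t : Fin (ℓ + 1), Polynomial.C (h t) * Polynomial.X ^ (t : ℕ)) = 0 := by
      apply Polynomial.taylor_injective (-R)
      rw [hzero, map_zero]
    have h2 := congrArg (fun p : Polynomial D.F => p.coeff (t : ℕ)) hQ00
    rw [coeff_hsum, dif_pos t.isLt, Polynomial.coeff_zero] at h2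
    rwa [Fin.eta t t.isLt] at h2
end
end

section
/- For any divisor E = E_1 + ⋯ + E_N, where E_1,…,E_N are distinct rational places of F different from P∞, there exists an x-partition of E, i.e. effective divisors U_1,…,U_μ such that: (1) E = U_1 + ⋯ + U_μ; (2) supp U_i ∩ supp U_j = ∅ for i ≠ j; (3) |deg U_i − deg U_j| ≤ 1 for all i, j; and (4) for any E_j, E_k ∈ supp U_i, x(E_j) = x(E_k) if and only if E_j = E_k. -/
noncomputable section

open Polynomial
attribute [local instance] Classical.propDecidable

/-!
For `c ∈ 𝔽_q` the function `x - c` is regular away from `P∞`, has a pole of order exactly `μ`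
there, and vanishes at every rational place `P` with `x(P) = c`. If there were more than `μ`
such places among the `E_j`, then `x - c` would be a nonzero element of `L(μ P∞ - ∑ P)`, a
Riemann–Roch space of negative degree. So every fibre of `j ↦ x(E_j)` has at most `μ` elements.

Now sort the `E_j` by their `x`-values and deal them out cyclically into `μ` piles. Each fibre
becomes a run of at most `μ` consecutive positions, so no pile receives two places with the same
`x`-value, and the pile sizes differ by at most one.
-/

open Finset

theorem Finsupp.sum_single_one_apply {ι α : Type*} [DecidableEq α] (s : Finset ι) (g : ι → α)
    (a : α) : (∑ j ∈ s, Finsupp.single (g j) (1 : ℤ)) a = #{j ∈ s | g j = a} := by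
  simp [Finsupp.finsetSum_apply, Finsupp.single_apply]

theorem Fin.card_filter_val_mod_eq {n μ : ℕ} (hμ : 0 < μ) (i : Fin μ) :
    #{p : Fin n | (p : ℕ) % μ = i} = n / μ + if (i : ℕ) < n % μ then 1 else 0 := by
  rw [← Nat.mod_eq_of_lt i.isLt, ← Nat.count_modEq_card n hμ, Nat.count_eq_card_filter_range,
    ← Nat.Iio_eq_range, ← Fin.map_valEmbedding_univ, filter_map, card_map]
  rfl

theorem Monotone.eq_of_mod_eq_of_apply_eq {α : Type*} [PartialOrder α] [DecidableEq α]
    {n μ : ℕ} {f : Fin n → α} (hf : Monotone f) (hfib : ∀ a, #{p | f p = a} ≤ μ)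
    {p q : Fin n} (hmod : (p : ℕ) % μ = q % μ) (hpq : f p = f q) : p = q := by
  wlog hle : p ≤ q generalizing p q
  · exact (this hmod.symm hpq.symm (le_of_not_ge hle)).symm
  have hIcc : Icc p q ⊆ ({m | f m = f p} : Finset _) := fun m hm => by
    rw [mem_Icc] at hm
    simpa using le_antisymm ((hf hm.2).trans_eq hpq.symm) (hf hm.1)
  have hlen : (q : ℕ) + 1 - p ≤ μ := by
    rw [← Fin.card_Icc]
    exact (card_le_card hIcc).trans (hfib _)
  have hdvd : μ ∣ (q : ℕ) - p := (Nat.modEq_iff_dvd' (Fin.le_iff_val_le_val.mp hle)).mp hmod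
  have : (q : ℕ) - p = 0 := Nat.eq_zero_of_dvd_of_lt hdvd (by omega)
  exact Fin.ext (by omega)

theorem Fin.exists_balanced_coloring_injective_on_fibers {β : Type*} [DecidableEq β]
    {n μ : ℕ} (hμ : 0 < μ) (κ : Fin n → β) (hκ : ∀ b, #{j | κ j = b} ≤ μ) :
    ∃ c : Fin n → Fin μ, (∀ j k, κ j = κ k → c j = c k → j = k) ∧
      ∀ i i', #{j | c j = i} ≤ #{j | c j = i'} + 1 := by
  -- Any linear order on `β` will do: sorting by it only has to make the fibres of `κ` intervals.
  let _ : LinearOrder β := WellOrderingRel.isWellOrder.linearOrder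
  set σ := Tuple.sort κ
  set c : Fin n → Fin μ := fun j => ⟨(σ.symm j : ℕ) % μ, Nat.mod_lt _ hμ⟩
  refine ⟨c, fun j k hjk hc => ?_, fun i i' => ?_⟩
  · have hfib : ∀ b, #{p | (κ ∘ σ) p = b} ≤ μ := fun b => by
      have := hκ b
      rwa [← map_univ_equiv σ, filter_map, card_map] at this
    simpa using (Tuple.monotone_sort κ).eq_of_mod_eq_of_apply_eq hfib (p := σ.symm j)
      (q := σ.symm k) (Fin.val_eq_of_eq hc)
      (by simpa only [Function.comp_apply, σ, Equiv.apply_symm_apply] using hjk)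
  · have hcard : ∀ i : Fin μ, #{j | c j = i} = n / μ + if (i : ℕ) < n % μ then 1 else 0 :=
      fun i => by
        rw [← Fin.card_filter_val_mod_eq hμ i]
        conv_lhs => rw [← map_univ_equiv σ, filter_map, card_map]
        simp [c, Fin.ext_iff]
    rw [hcard, hcard]
    split_ifs <;> omega

namespace FnF

variable {Fq : Type} [Field Fq] (D : FnF Fq)

theorem degDiv_sub (A B : D.Divisor) : D.degDiv (A - B) = D.degDiv A - D.degDiv B :=
  Finsupp.sum_sub_index fun _ _ _ => sub_mul _ _ _

theorem degDiv_single (P : D.Place) (n : ℤ) :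
    D.degDiv (Finsupp.single P n) = n * D.degPlace P :=
  Finsupp.sum_single_index (zero_mul _)

theorem degDiv_sum_single_one {ι : Type*} (s : Finset ι) (g : ι → D.Place) :
    D.degDiv (∑ j ∈ s, Finsupp.single (g j) 1) = ∑ j ∈ s, (D.degPlace (g j) : ℤ) := by
  rw [degDiv, ← Finsupp.sum_finsetSum_index (fun _ => zero_mul _) (fun _ _ _ => add_mul _ _ _)]
  simp

theorem ne_zero_of_v_ne_zero {P : D.Place} {f : D.F} (h : D.v P f ≠ 0) : f ≠ 0 :=
  fun hf => h (hf ▸ D.v_zero P)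

theorem min_v_le_v_add {P : D.Place} {f g : D.F} (h : f + g ≠ 0) :
    min (D.v P f) (D.v P g) ≤ D.v P (f + g) := by
  by_cases hf : f = 0
  · simp [hf]
  by_cases hg : g = 0
  · simp [hg]
  exact D.v_add P f g h hf hg

theorem v_add_eq_left_of_lt {P : D.Place} {f g : D.F} (hf : f ≠ 0) (h : D.v P f < D.v P g) :
    D.v P (f + g) = D.v P f := by
  have hfg : f + g ≠ 0 := fun hfg => by
    rw [eq_neg_of_add_eq_zero_right hfg, D.v_neg] at h
    exact lt_irrefl _ h
  have hle := D.min_v_le_v_add (P := P) hfg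
  have hge := D.min_v_le_v_add (P := P) (f := f + g) (g := -g) (by simpa using hf)
  simp only [add_neg_cancel_right, D.v_neg] at hge
  omega

theorem v_sub_algebraMap_of_neg {P : D.Place} {f : D.F} (h : D.v P f < 0) (c : Fq) :
    D.v P (f - algebraMap Fq D.F c) = D.v P f := by
  rw [sub_eq_add_neg, ← map_neg]
  exact D.v_add_eq_left_of_lt (D.ne_zero_of_v_ne_zero h.ne) (by rwa [D.v_const])

theorem v_sub_algebraMap_nonneg {P : D.Place} {f : D.F} (h : 0 ≤ D.v P f) (c : Fq) :
    0 ≤ D.v P (f - algebraMap Fq D.F c) := by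
  by_cases hfc : f - algebraMap Fq D.F c = 0
  · rw [hfc, D.v_zero]
  rw [sub_eq_add_neg, ← map_neg] at hfc ⊢
  have := D.min_v_le_v_add (P := P) hfc
  rw [D.v_const] at this
  omega

theorem one_le_v_sub_algebraMap_eval {P : D.Place} (hP : D.degPlace P = 1) {f : D.F}
    (hf : 0 ≤ D.v P f) (hne : f - algebraMap Fq D.F (D.eval P f) ≠ 0) :
    1 ≤ D.v P (f - algebraMap Fq D.F (D.eval P f)) := by
  have hc : 0 ≤ D.v P (algebraMap Fq D.F (-D.eval P f)) := (D.v_const P _).ge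
  have heval : D.eval P (f - algebraMap Fq D.F (D.eval P f)) = 0 := by
    rw [sub_eq_add_neg, ← map_neg, D.eval_add P _ _ hP hf hc, D.eval_const P _ hP, add_neg_cancel]
  exact ((D.eval_eq_zero_iff P _ hP (D.v_sub_algebraMap_nonneg hf _)).mp heval).resolve_left hne

theorem sum_degPlace_le_of_one_le_v {Pinf : D.Place} {m : ℕ} {f : D.F} (hf : f ≠ 0)
    (hpole : -(m : ℤ) ≤ D.v Pinf f) (hreg : ∀ P, P ≠ Pinf → 0 ≤ D.v P f)
    {T : Finset D.Place} (hT : ∀ P ∈ T, P ≠ Pinf ∧ 1 ≤ D.v P f) :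
    ∑ P ∈ T, (D.degPlace P : ℤ) ≤ m * D.degPlace Pinf := by
  by_contra! hlt
  set A : D.Divisor := Finsupp.single Pinf (m : ℤ) - ∑ P ∈ T, Finsupp.single P 1
  have hdeg : D.degDiv A < 0 := by
    have := D.degDiv_sum_single_one T id
    simp only [A, degDiv_sub, degDiv_single, id] at this ⊢
    omega
  have hmem : f ∈ D.RRmod A := by
    refine (D.mem_RRmod A f).mpr (Or.inr fun Q => ?_)
    have hAQ : A Q = Finsupp.single Pinf (m : ℤ) Q - if Q ∈ T then 1 else 0 := by
      simp [A, Finsupp.single_apply]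
    by_cases hQ : Q = Pinf
    · subst hQ
      have : Q ∉ T := fun h => (hT Q h).1 rfl
      simp [hAQ, this]
      omega
    · have := hreg Q hQ
      by_cases hQT : Q ∈ T
      · have := (hT Q hQT).2
        simp [hAQ, hQT, Finsupp.single_eq_of_ne hQ]
        omega
      · simp [hAQ, hQT, Finsupp.single_eq_of_ne hQ]
        omega
  rw [D.RRmod_eq_bot A hdeg, Submodule.mem_bot] at hmem
  exact hf hmem

theorem card_le_of_eval_eq {Pinf : D.Place} (hPinf : D.degPlace Pinf = 1) {μ : ℕ} (hμ : 0 < μ)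
    {x : D.F} (hxv : D.v Pinf x = -(μ : ℤ)) (hxreg : ∀ P, P ≠ Pinf → 0 ≤ D.v P x)
    {T : Finset D.Place} (hT : ∀ P ∈ T, P ≠ Pinf ∧ D.degPlace P = 1) {c : Fq}
    (hc : ∀ P ∈ T, D.eval P x = c) : #T ≤ μ := by
  have hpole : D.v Pinf (x - algebraMap Fq D.F c) = -(μ : ℤ) := by
    rw [D.v_sub_algebraMap_of_neg (f := x) (by omega), hxv]
  have hne : x - algebraMap Fq D.F c ≠ 0 := D.ne_zero_of_v_ne_zero (P := Pinf) (by omega)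
  have hzero : ∀ P ∈ T, P ≠ Pinf ∧ 1 ≤ D.v P (x - algebraMap Fq D.F c) := fun P hP => by
    refine ⟨(hT P hP).1, ?_⟩
    rw [← hc P hP] at hne ⊢
    exact D.one_le_v_sub_algebraMap_eval (hT P hP).2 (hxreg P (hT P hP).1) hne
  have := D.sum_degPlace_le_of_one_le_v hne hpole.ge
    (fun P hP => D.v_sub_algebraMap_nonneg (hxreg P hP) c) hzero
  rw [sum_congr rfl fun P hP => congrArg Nat.cast (hT P hP).2, hPinf] at this
  simpa using this

end FnF

open FnF in
theorem exists_x_partition_general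
    {Fq : Type} [Field Fq] (D : FnF Fq)
    (Pinf : D.Place) (hPinf : D.degPlace Pinf = 1)
    (μ : ℕ) (hμpos : 0 < μ)
    (x : D.F) (hxv : D.v Pinf x = -(μ : ℤ)) (hxreg : ∀ P, P ≠ Pinf → 0 ≤ D.v P x)
    (N : ℕ) (Es : Fin N → D.Place) (hinj : Function.Injective Es)
    (hrat : ∀ j, D.degPlace (Es j) = 1) (hne : ∀ j, Es j ≠ Pinf) :
    ∃ U : Fin μ → D.Divisor,
      (∀ i, ∀ P, 0 ≤ U i P) ∧
      (∑ i, U i) = ∑ j, Finsupp.single (Es j) (1 : ℤ) ∧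
      (∀ i j, i ≠ j → Disjoint (U i).support (U j).support) ∧
      (∀ i j, |D.degDiv (U i) - D.degDiv (U j)| ≤ 1) ∧
      (∀ i, ∀ P ∈ (U i).support, ∀ Q ∈ (U i).support,
        (D.eval P x = D.eval Q x ↔ P = Q)) := by
  have hfiber : ∀ b : Fq, #{j | D.eval (Es j) x = b} ≤ μ := fun b => by
    rw [← card_image_of_injective _ hinj]
    refine D.card_le_of_eval_eq hPinf hμpos hxv hxreg (c := b) (fun P hP => ?_) (fun P hP => ?_) <;>
      obtain ⟨j, hj, rfl⟩ := mem_image.mp hP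
    · exact ⟨hne j, hrat j⟩
    · exact (mem_filter.mp hj).2
  obtain ⟨c, hc_inj, hc_bal⟩ := Fin.exists_balanced_coloring_injective_on_fibers hμpos _ hfiber
  have hsupp : ∀ i P, P ∈ (∑ j with c j = i, Finsupp.single (Es j) (1 : ℤ)).support →
      ∃ j, c j = i ∧ Es j = P := fun i P hP => by
    simpa [Finsupp.sum_single_one_apply, filter_filter] using hP
  refine ⟨fun i => ∑ j with c j = i, Finsupp.single (Es j) 1, fun i P => ?_, sum_fiberwise _ _ _,
    fun i i' hii' => ?_, fun i i' => ?_, fun i P hP Q hQ => ?_⟩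
  · rw [Finsupp.sum_single_one_apply]
    positivity
  · refine disjoint_left.mpr fun P hP hP' => hii' ?_
    obtain ⟨j, rfl, rfl⟩ := hsupp i P hP
    obtain ⟨j', rfl, hj'⟩ := hsupp i' _ hP'
    rw [hinj hj']
  · simp only [degDiv_sum_single_one, hrat, Nat.cast_one, sum_const, nsmul_eq_mul, mul_one]
    have := hc_bal i i'
    have := hc_bal i' i
    exact abs_sub_le_iff.mpr ⟨by omega, by omega⟩
  · obtain ⟨j, rfl, rfl⟩ := hsupp i P hP
    obtain ⟨k, hk, rfl⟩ := hsupp _ Q hQ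
    exact ⟨fun h => congrArg Es (hc_inj j k h hk.symm), fun h => h ▸ rfl⟩

open FnF in
/-- For any divisor `E = E_1 + ⋯ + E_N`, where `E_1,…,E_N` are distinct
rational places of `F` different from `P∞`, there exists an `x`-partition of `E`, i.e.
effective divisors `U_1,…,U_μ` such that: (1) `E = U_1 + ⋯ + U_μ`; (2) the supports of the
`U_i` are pairwise disjoint; (3) `|deg U_i − deg U_j| ≤ 1` for all `i, j`; and (4) for any
places `P, Q` in the support of the same `U_i`, `x(P) = x(Q)` iff `P = Q`. -/
theorem exists_x_partition
    {Fq : Type} [Field Fq] [Fintype Fq] (D : FnF Fq)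
    (Pinf : D.Place) (hPinf : D.degPlace Pinf = 1)
    (μ : ℕ) (hμpos : 0 < μ) (hμmem : (μ : ℤ) ∈ D.WSemigroup Pinf)
    (hμmin : ∀ m : ℤ, 0 < m → m ∈ D.WSemigroup Pinf → (μ : ℤ) ≤ m)
    (x : D.F) (hxv : D.v Pinf x = -(μ : ℤ)) (hxreg : ∀ P, P ≠ Pinf → 0 ≤ D.v P x)
    (N : ℕ) (Es : Fin N → D.Place) (hinj : Function.Injective Es)
    (hrat : ∀ j, D.degPlace (Es j) = 1) (hne : ∀ j, Es j ≠ Pinf) :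
    ∃ U : Fin μ → D.Divisor,
      (∀ i, ∀ P, 0 ≤ U i P) ∧
      (∑ i, U i) = ∑ j, Finsupp.single (Es j) (1 : ℤ) ∧
      (∀ i j, i ≠ j → Disjoint (U i).support (U j).support) ∧
      (∀ i j, |D.degDiv (U i) - D.degDiv (U j)| ≤ 1) ∧
      (∀ i, ∀ P ∈ (U i).support, ∀ Q ∈ (U i).support,
        (D.eval P x = D.eval Q x ↔ P = Q)) :=
  exists_x_partition_general D Pinf hPinf μ hμpos x hxv hxreg N Es hinj hrat hne
end
end
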